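/- arXiv:2306.06535 — 3 statements merged into one kernel-verified Lean document; each statement's English description precedes it below -/
import Mathlib

section
/- Let p ∈ [1,∞) and let f : ℝ \ {0} → ℂ be measurable with f(z) = f(−1/z) for all z ≠ 0. Define f̃ : ℝ → ℂ by f̃(k) = f(z₊(k)) with z₊(k) = (k + √(k² + 4))/2. Then ∫_ℝ |f(z)|^p dz = ∫_ℝ |f̃(k)|^p dk (both sides being equal, possibly both infinite). In particular f ∈ L^p(ℝ) if and only if f̃ ∈ L^p(ℝ), with equal norms. -/
/-!
Split `ℝ` at `0` and substitute `z = z₊(k)` on `(0, ∞)` and `z = z₋(k)` on `(-∞, 0)`.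
Since `z₊ + z₋ = id`, the Jacobians `z₊'` and `z₋'` add up to `1`, and since `z₋ = -1/z₊`
the symmetry turns the integrand on `(-∞, 0)` into `g (z₊ k)`; the two halves thus
recombine into `∫ g (z₊ k) dk`.
-/

open MeasureTheory Filter Set
open scoped Topology ENNReal NNReal

noncomputable section

/-- `z₊(k) = (k + √(k² + 4))/2`, the positive solution of `z - 1/z = k`. -/
def zplus (k : ℝ) : ℝ := (k + Real.sqrt (k ^ 2 + 4)) / 2

def zminus (k : ℝ) : ℝ := (k - Real.sqrt (k ^ 2 + 4)) / 2

lemma abs_lt_sqrt_sq_add_four (k : ℝ) : |k| < Real.sqrt (k ^ 2 + 4) := by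
  rw [← Real.sqrt_sq_eq_abs]
  exact Real.sqrt_lt_sqrt (sq_nonneg k) (by linarith)

lemma zplus_pos (k : ℝ) : 0 < zplus k := by
  have := abs_lt_sqrt_sq_add_four k
  have := neg_abs_le k
  unfold zplus
  linarith

lemma zminus_neg (k : ℝ) : zminus k < 0 := by
  have := abs_lt_sqrt_sq_add_four k
  have := le_abs_self k
  unfold zminus
  linarith

lemma zplus_add_zminus (k : ℝ) : zplus k + zminus k = k := by
  unfold zplus zminus
  ring

lemma zplus_mul_zminus (k : ℝ) : zplus k * zminus k = -1 := by
  have := Real.sq_sqrt (by positivity : (0 : ℝ) ≤ k ^ 2 + 4)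
  unfold zplus zminus
  linear_combination -this / 4

lemma zminus_eq_neg_one_div_zplus (k : ℝ) : zminus k = -1 / zplus k := by
  rw [eq_div_iff (zplus_pos k).ne', mul_comm, zplus_mul_zminus]

lemma zplus_sub_one_div (k : ℝ) : zplus k - 1 / zplus k = k := by
  rw [sub_eq_add_neg, ← neg_div, ← zminus_eq_neg_one_div_zplus, zplus_add_zminus]

lemma zminus_sub_one_div (k : ℝ) : zminus k - 1 / zminus k = k := by
  have : 1 / zminus k = -zplus k := by
    rw [div_eq_iff (zminus_neg k).ne, neg_mul, zplus_mul_zminus, neg_neg]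
  rw [this, sub_neg_eq_add, add_comm, zplus_add_zminus]

lemma zplus_injective : Function.Injective zplus := fun a b h => by
  rw [← zplus_sub_one_div a, ← zplus_sub_one_div b, h]

lemma zminus_injective : Function.Injective zminus := fun a b h => by
  rw [← zminus_sub_one_div a, ← zminus_sub_one_div b, h]

lemma sqrt_sub_one_div_sq_add_four {z : ℝ} (hz : z ≠ 0) :
    Real.sqrt ((z - 1 / z) ^ 2 + 4) = |z + 1 / z| := by
  rw [← Real.sqrt_sq_eq_abs]
  congr 1
  field_simp
  ring

lemma range_zplus : range zplus = Ioi 0 := by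
  refine (range_subset_iff.2 zplus_pos).antisymm fun z (hz : 0 < z) => ⟨z - 1 / z, ?_⟩
  rw [zplus, sqrt_sub_one_div_sq_add_four hz.ne', abs_of_pos (by positivity)]
  ring

lemma range_zminus : range zminus = Iio 0 := by
  refine (range_subset_iff.2 zminus_neg).antisymm fun z (hz : z < 0) => ⟨z - 1 / z, ?_⟩
  have : z + 1 / z < 0 := by have := one_div_neg.2 hz; linarith
  rw [zminus, sqrt_sub_one_div_sq_add_four hz.ne, abs_of_neg this]
  ring

def zplusDeriv (k : ℝ) : ℝ := (1 + k / Real.sqrt (k ^ 2 + 4)) / 2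

lemma hasDerivAt_zplus (k : ℝ) : HasDerivAt zplus (zplusDeriv k) k := by
  have hsq : HasDerivAt (fun k : ℝ => k ^ 2 + 4) (2 * k) k := by
    simpa using (hasDerivAt_pow 2 k).add_const 4
  have hsqrt := (Real.hasDerivAt_sqrt (by positivity)).comp k hsq
  refine (((hasDerivAt_id k).add hsqrt).div_const 2).congr_deriv ?_
  unfold zplusDeriv
  field_simp

lemma hasDerivAt_zminus (k : ℝ) : HasDerivAt zminus (1 - zplusDeriv k) k := by
  have : zminus = fun k => k - zplus k := funext fun k => eq_sub_of_add_eq' (zplus_add_zminus k)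
  rw [this]
  exact (hasDerivAt_id k).sub (hasDerivAt_zplus k)

lemma zplusDeriv_mem_Icc (k : ℝ) : zplusDeriv k ∈ Icc 0 1 := by
  have hs : 0 < Real.sqrt (k ^ 2 + 4) := by positivity
  have : |k / Real.sqrt (k ^ 2 + 4)| < 1 := by
    rw [abs_div, abs_of_pos hs, div_lt_one hs]
    exact abs_lt_sqrt_sq_add_four k
  rw [abs_lt] at this
  constructor <;> unfold zplusDeriv <;> linarith

@[fun_prop]
lemma measurable_zplus : Measurable zplus := by
  unfold zplus
  fun_prop

@[fun_prop]
lemma measurable_zplusDeriv : Measurable zplusDeriv := by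
  unfold zplusDeriv
  fun_prop

lemma lintegral_eq_setLIntegral_Iio_add_setLIntegral_Ioi {α : Type*} [LinearOrder α]
    [TopologicalSpace α] [OrderClosedTopology α] [MeasurableSpace α] [OpensMeasurableSpace α]
    {μ : Measure α} [NullSingletonClass μ] (g : α → ℝ≥0∞) (a : α) :
    ∫⁻ x, g x ∂μ = ∫⁻ x in Iio a, g x ∂μ + ∫⁻ x in Ioi a, g x ∂μ := by
  rw [← lintegral_union measurableSet_Ioi ((Iic_disjoint_Ioi le_rfl).mono_left Iio_subset_Iic_self),
    Iio_union_Ioi, restrict_compl_singleton]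

lemma setLIntegral_Ioi_zero_eq_lintegral_comp_zplus (g : ℝ → ℝ≥0∞) :
    ∫⁻ z in Ioi 0, g z = ∫⁻ k, ENNReal.ofReal (zplusDeriv k) * g (zplus k) := by
  have := lintegral_image_eq_lintegral_abs_deriv_mul MeasurableSet.univ
    (fun k _ => (hasDerivAt_zplus k).hasDerivWithinAt) zplus_injective.injOn g
  simpa only [image_univ, range_zplus, setLIntegral_univ, abs_of_nonneg (zplusDeriv_mem_Icc _).1]
    using this

lemma setLIntegral_Iio_zero_eq_lintegral_comp_zminus (g : ℝ → ℝ≥0∞) :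
    ∫⁻ z in Iio 0, g z = ∫⁻ k, ENNReal.ofReal (1 - zplusDeriv k) * g (zminus k) := by
  have := lintegral_image_eq_lintegral_abs_deriv_mul MeasurableSet.univ
    (fun k _ => (hasDerivAt_zminus k).hasDerivWithinAt) zminus_injective.injOn g
  simpa only [image_univ, range_zminus, setLIntegral_univ,
    abs_of_nonneg (sub_nonneg.2 (zplusDeriv_mem_Icc _).2)] using this

theorem lintegral_comp_zplus {g : ℝ → ℝ≥0∞} (hg : Measurable g)
    (hsym : ∀ z, z ≠ 0 → g z = g (-1 / z)) : ∫⁻ k, g (zplus k) = ∫⁻ z, g z := by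
  have hminus (k : ℝ) : g (zminus k) = g (zplus k) := by
    rw [zminus_eq_neg_one_div_zplus, ← hsym _ (zplus_pos k).ne']
  rw [lintegral_eq_setLIntegral_Iio_add_setLIntegral_Ioi g 0,
    setLIntegral_Iio_zero_eq_lintegral_comp_zminus, setLIntegral_Ioi_zero_eq_lintegral_comp_zplus]
  simp_rw [hminus]
  rw [← lintegral_add_left (by fun_prop)]
  refine lintegral_congr fun k => ?_
  rw [← add_mul, ← ENNReal.ofReal_add (sub_nonneg.2 (zplusDeriv_mem_Icc k).2)
    (zplusDeriv_mem_Icc k).1, sub_add_cancel, ENNReal.ofReal_one, one_mul]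

section Lp

variable {E : Type*} [NormedAddCommGroup E] {f : ℝ → E}

theorem eLpNorm_comp_zplus (hf : StronglyMeasurable f) (hsym : ∀ z, z ≠ 0 → f z = f (-1 / z))
    {q : ℝ≥0∞} (hq : q ≠ ∞) : eLpNorm (fun k => f (zplus k)) q volume = eLpNorm f q volume := by
  rcases eq_or_ne q 0 with rfl | hq0
  · simp only [eLpNorm_exponent_zero]
  have hg : Measurable fun z => ‖f z‖ₑ ^ q.toReal := hf.enorm.pow_const _
  rw [eLpNorm_eq_lintegral_rpow_enorm_toReal hq0 hq, eLpNorm_eq_lintegral_rpow_enorm_toReal hq0 hq,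
    lintegral_comp_zplus hg fun z hz => by rw [hsym z hz]]

theorem memLp_comp_zplus_iff (hf : StronglyMeasurable f) (hsym : ∀ z, z ≠ 0 → f z = f (-1 / z))
    {q : ℝ≥0∞} (hq : q ≠ ∞) : MemLp (fun k => f (zplus k)) q volume ↔ MemLp f q volume := by
  rw [MemLp, MemLp, eLpNorm_comp_zplus hf hsym hq]
  exact and_congr_left' ⟨fun _ => hf.aestronglyMeasurable,
    fun _ => (hf.comp_measurable measurable_zplus).aestronglyMeasurable⟩

end Lp

theorem symm_change_of_variables_general (p : ℝ) (f : ℝ → ℂ) (hf : Measurable f)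
    (hsym : ∀ z : ℝ, z ≠ 0 → f z = f (-1 / z)) :
    (∫⁻ z : ℝ, (‖f z‖₊ : ℝ≥0∞) ^ p) = (∫⁻ k : ℝ, (‖f (zplus k)‖₊ : ℝ≥0∞) ^ p) ∧
    eLpNorm f (ENNReal.ofReal p) (volume : Measure ℝ) =
      eLpNorm (fun k => f (zplus k)) (ENNReal.ofReal p) (volume : Measure ℝ) ∧
    (MemLp f (ENNReal.ofReal p) (volume : Measure ℝ) ↔
      MemLp (fun k => f (zplus k)) (ENNReal.ofReal p) (volume : Measure ℝ)) := by
  have hg : Measurable fun z => (‖f z‖₊ : ℝ≥0∞) ^ p := by fun_prop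
  exact ⟨(lintegral_comp_zplus hg fun z hz => by rw [hsym z hz]).symm,
    (eLpNorm_comp_zplus hf.stronglyMeasurable hsym ENNReal.ofReal_ne_top).symm,
    (memLp_comp_zplus_iff hf.stronglyMeasurable hsym ENNReal.ofReal_ne_top).symm⟩

/-- Change of variables for symmetric functions: if `f(z) = f(-1/z)` for
all `z ≠ 0`, then for every `p ∈ [1,∞)`, `∫_ℝ |f(z)|^p dz = ∫_ℝ |f(z₊(k))|^p dk` (both
sides possibly infinite); in particular `f ∈ L^p` iff `f̃ ∈ L^p`, with equal norms. -/
theorem symm_change_of_variables (p : ℝ) (hp : 1 ≤ p) (f : ℝ → ℂ) (hf : Measurable f)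
    (hsym : ∀ z : ℝ, z ≠ 0 → f z = f (-1 / z)) :
    (∫⁻ z : ℝ, (‖f z‖₊ : ℝ≥0∞) ^ p) = (∫⁻ k : ℝ, (‖f (zplus k)‖₊ : ℝ≥0∞) ^ p) ∧
    eLpNorm f (ENNReal.ofReal p) (volume : Measure ℝ) =
      eLpNorm (fun k => f (zplus k)) (ENNReal.ofReal p) (volume : Measure ℝ) ∧
    (MemLp f (ENNReal.ofReal p) (volume : Measure ℝ) ↔
      MemLp (fun k => f (zplus k)) (ENNReal.ofReal p) (volume : Measure ℝ)) :=
  symm_change_of_variables_general p f hf hsym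
end
end

section
/- For all measurable functions F, G : (0,∞) → [0,∞], ∫₀^∞ ( ∫_y^∞ F(k) dk ) ( ∫_y^∞ G(k) dk ) dy ≤ ( ∫₀^∞ k^{1/2} F(k) dk ) ( ∫₀^∞ k^{1/2} G(k) dk ), where both sides may be infinite. -/
open MeasureTheory Set
open scoped ENNReal

noncomputable section

/-!
View `F` and `G` as densities of measures `μ`, `ν` on `(0, ∞)`, so that the tails are `μ (Ioi y)`
and `ν (Ioi y)`. Their product is the `μ × ν`-measure of `{(k, l) | y < min k l}`, so by the layer
cake formula the left-hand side equals `∫ min k l d(μ × ν)`. Bounding `min k l ≤ √k √l` makes the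
integrand a product, and the right-hand side factors.
-/

theorem lintegral_ofReal_eq_lintegral_meas_lt {α : Type*} [MeasurableSpace α] (μ : Measure α)
    {f : α → ℝ} (hf : AEMeasurable f μ) :
    ∫⁻ a, ENNReal.ofReal (f a) ∂μ = ∫⁻ t in Ioi 0, μ {a | t < f a} := by
  have layer_cake := lintegral_eq_lintegral_meas_lt μ (f := fun a => max (f a) 0)
    (ae_of_all _ fun a => le_max_right _ _) (hf.max aemeasurable_const)
  simp only [ENNReal.ofReal_max, ENNReal.ofReal_zero, max_eq_left, zero_le] at layer_cake
  rw [layer_cake]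
  refine setLIntegral_congr_fun measurableSet_Ioi fun t (ht : 0 < t) => ?_
  simp only [lt_max_iff, ht.not_gt, or_false]

theorem lintegral_meas_Ioi_mul_meas_Ioi (μ ν : Measure ℝ) [SFinite ν] :
    ∫⁻ y in Ioi 0, μ (Ioi y) * ν (Ioi y) = ∫⁻ p, ENNReal.ofReal (min p.1 p.2) ∂μ.prod ν := by
  rw [lintegral_ofReal_eq_lintegral_meas_lt _ (measurable_fst.min measurable_snd).aemeasurable]
  refine lintegral_congr fun y => ?_
  have min_gt_eq_prod : {p : ℝ × ℝ | y < min p.1 p.2} = Ioi y ×ˢ Ioi y := by ext p; simp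
  rw [min_gt_eq_prod, Measure.prod_prod]

theorem ofReal_min_le_ofReal_sqrt_mul_ofReal_sqrt (k l : ℝ) :
    ENNReal.ofReal (min k l) ≤ ENNReal.ofReal √k * ENNReal.ofReal √l := by
  rw [← ENNReal.ofReal_mul (Real.sqrt_nonneg k)]
  refine ENNReal.ofReal_le_ofReal ?_
  rcases le_or_gt (min k l) 0 with hmin | hmin
  · exact hmin.trans (by positivity)
  calc min k l = √(min k l) * √(min k l) := (Real.mul_self_sqrt hmin.le).symm
    _ ≤ √k * √l := by gcongr <;> simp

theorem lintegral_meas_Ioi_mul_meas_Ioi_le (μ ν : Measure ℝ) [SFinite μ] [SFinite ν] :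
    ∫⁻ y in Ioi 0, μ (Ioi y) * ν (Ioi y) ≤
      (∫⁻ k, ENNReal.ofReal √k ∂μ) * ∫⁻ l, ENNReal.ofReal √l ∂ν := by
  rw [lintegral_meas_Ioi_mul_meas_Ioi, ← lintegral_prod_mul (by fun_prop) (by fun_prop)]
  exact lintegral_mono fun p => ofReal_min_le_ofReal_sqrt_mul_ofReal_sqrt p.1 p.2

theorem withDensity_restrict_Ioi_apply_Ioi (μ : Measure ℝ) (F : ℝ → ℝ≥0∞) {a y : ℝ}
    (hy : a ≤ y) : (μ.restrict (Ioi a)).withDensity F (Ioi y) = ∫⁻ k in Ioi y, F k ∂μ := by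
  rw [withDensity_apply _ measurableSet_Ioi, Measure.restrict_restrict measurableSet_Ioi,
    Ioi_inter_Ioi, sup_eq_left.mpr hy]

/-- For all measurable `F, G : (0,∞) → [0,∞]`,
`∫₀^∞ (∫_y^∞ F)(∫_y^∞ G) dy ≤ (∫₀^∞ √k F(k) dk)(∫₀^∞ √k G(k) dk)`. -/
theorem hardy_type_inequality_half (F G : ℝ → ℝ≥0∞)
    (hF : Measurable F) (hG : Measurable G) :
    (∫⁻ y in Set.Ioi (0 : ℝ), (∫⁻ k in Set.Ioi y, F k) * ∫⁻ k in Set.Ioi y, G k) ≤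
      (∫⁻ k in Set.Ioi (0 : ℝ), ENNReal.ofReal (Real.sqrt k) * F k) *
        ∫⁻ k in Set.Ioi (0 : ℝ), ENNReal.ofReal (Real.sqrt k) * G k := by
  set μ := (volume.restrict (Ioi (0 : ℝ))).withDensity F
  set ν := (volume.restrict (Ioi (0 : ℝ))).withDensity G
  have sqrt_integral (H : ℝ → ℝ≥0∞) (hH : Measurable H) :
      ∫⁻ k, ENNReal.ofReal √k ∂(volume.restrict (Ioi 0)).withDensity H =
        ∫⁻ k in Ioi 0, ENNReal.ofReal √k * H k := by
    rw [lintegral_withDensity_eq_lintegral_mul _ hH (by fun_prop)]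
    simp only [Pi.mul_apply, mul_comm]
  calc (∫⁻ y in Ioi 0, (∫⁻ k in Ioi y, F k) * ∫⁻ k in Ioi y, G k)
      = ∫⁻ y in Ioi 0, μ (Ioi y) * ν (Ioi y) :=
        setLIntegral_congr_fun measurableSet_Ioi fun y (hy : 0 < y) => by
          rw [withDensity_restrict_Ioi_apply_Ioi _ _ hy.le,
            withDensity_restrict_Ioi_apply_Ioi _ _ hy.le]
    _ ≤ (∫⁻ k, ENNReal.ofReal √k ∂μ) * ∫⁻ l, ENNReal.ofReal √l ∂ν :=
        lintegral_meas_Ioi_mul_meas_Ioi_le μ ν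
    _ = _ := by rw [sqrt_integral F hF, sqrt_integral G hG]
end
end

section
/- For all measurable functions F, G : (0,∞) → [0,∞], ∫₀^∞ y² ( ∫_y^∞ F(k) dk ) ( ∫_y^∞ G(k) dk ) dy ≤ (1/3) ( ∫₀^∞ k^{3/2} F(k) dk ) ( ∫₀^∞ k^{3/2} G(k) dk ), where both sides may be infinite. -/
open MeasureTheory Set
open scoped ENNReal

/-! Writing the product of the two tails at `y` as a double integral over `{k > y, l > y}` and
integrating in `y` first (Tonelli), the left side becomes `∫∫ F(k) G(l) min(k,l)³/3 dk dl`;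
the bound is then `min(k,l)³ ≤ k^{3/2} l^{3/2}`. -/

section TailProduct

variable {μ : Measure ℝ} [SFinite μ] {F G : ℝ → ℝ≥0∞}

theorem setLIntegral_Ioi_mul_setLIntegral_Ioi (hF : Measurable F) (hG : Measurable G) (y : ℝ) :
    (∫⁻ k in Ioi y, F k ∂μ) * ∫⁻ l in Ioi y, G l ∂μ =
      ∫⁻ p, (Ioi y).indicator F p.1 * (Ioi y).indicator G p.2 ∂μ.prod μ := by
  rw [← lintegral_indicator measurableSet_Ioi, ← lintegral_indicator measurableSet_Ioi,
    lintegral_prod_mul (hF.indicator measurableSet_Ioi).aemeasurable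
      (hG.indicator measurableSet_Ioi).aemeasurable]

theorem mul_indicator_Ioi_mul_indicator_Ioi (w : ℝ → ℝ≥0∞) (y k l : ℝ) :
    w y * ((Ioi y).indicator F k * (Ioi y).indicator G l) =
      (Iio (min k l)).indicator w y * (F k * G l) := by
  by_cases hk : y < k <;> by_cases hl : y < l <;> simp [hk, hl]

theorem lintegral_mul_setLIntegral_Ioi_mul_setLIntegral_Ioi {w : ℝ → ℝ≥0∞}
    (hw : Measurable w) (hF : Measurable F) (hG : Measurable G) :
    ∫⁻ y, w y * ((∫⁻ k in Ioi y, F k ∂μ) * ∫⁻ l in Ioi y, G l ∂μ) ∂μ =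
      ∫⁻ p, (∫⁻ y in Iio (min p.1 p.2), w y ∂μ) * (F p.1 * G p.2) ∂μ.prod μ := by
  have hmeas : Measurable fun q : ℝ × ℝ × ℝ =>
      (Iio (min q.2.1 q.2.2)).indicator w q.1 * (F q.2.1 * G q.2.2) := by
    refine Measurable.mul ?_ (by fun_prop)
    exact Measurable.ite (measurableSet_lt measurable_fst (by fun_prop)) (hw.comp measurable_fst)
      measurable_const
  calc ∫⁻ y, w y * ((∫⁻ k in Ioi y, F k ∂μ) * ∫⁻ l in Ioi y, G l ∂μ) ∂μ
      = ∫⁻ y, ∫⁻ p, (Iio (min p.1 p.2)).indicator w y * (F p.1 * G p.2)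
          ∂μ.prod μ ∂μ := by
        refine lintegral_congr fun y => ?_
        have hprod : Measurable fun p : ℝ × ℝ =>
            (Ioi y).indicator F p.1 * (Ioi y).indicator G p.2 :=
          ((hF.indicator measurableSet_Ioi).comp measurable_fst).mul
            ((hG.indicator measurableSet_Ioi).comp measurable_snd)
        rw [setLIntegral_Ioi_mul_setLIntegral_Ioi hF hG, ← lintegral_const_mul _ hprod]
        simp_rw [mul_indicator_Ioi_mul_indicator_Ioi]
    _ = ∫⁻ p, ∫⁻ y, (Iio (min p.1 p.2)).indicator w y * (F p.1 * G p.2)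
          ∂μ ∂μ.prod μ :=
        lintegral_lintegral_swap hmeas.aemeasurable
    _ = _ := by
        refine lintegral_congr fun p => ?_
        rw [lintegral_mul_const _ (hw.indicator measurableSet_Iio),
          lintegral_indicator measurableSet_Iio]

end TailProduct

theorem min_rpow_add_le_rpow_mul_rpow {k l p q : ℝ} (hk : 0 ≤ k) (hl : 0 ≤ l) (hp : 0 ≤ p)
    (hq : 0 ≤ q) : min k l ^ (p + q) ≤ k ^ p * l ^ q := by
  have hm : 0 ≤ min k l := le_min hk hl
  rw [Real.rpow_add_of_nonneg hm hp hq]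
  exact mul_le_mul (Real.rpow_le_rpow hm (min_le_left k l) hp)
      (Real.rpow_le_rpow hm (min_le_right k l) hq) (by positivity) (by positivity)

theorem setLIntegral_Ioo_zero_sq {m : ℝ} (hm : 0 ≤ m) :
    ∫⁻ y in Ioo 0 m, ENNReal.ofReal (y ^ 2) = ENNReal.ofReal (m ^ 3 / 3) := by
  rw [← ofReal_integral_eq_lintegral_ofReal
      ((intervalIntegral.intervalIntegrable_pow 2).1.mono_set Ioo_subset_Ioc_self)
      (ae_of_all _ fun y => sq_nonneg y),
    ← integral_Ioc_eq_integral_Ioo, ← intervalIntegral.integral_of_le hm, integral_pow]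
  norm_num

theorem setLIntegral_Ioo_zero_min_sq_le (k l : ℝ) :
    ∫⁻ y in Ioo 0 (min k l), ENNReal.ofReal (y ^ 2) ≤
      3⁻¹ * (ENNReal.ofReal (k ^ ((3 : ℝ) / 2)) * ENNReal.ofReal (l ^ ((3 : ℝ) / 2))) := by
  rcases le_or_gt (min k l) 0 with hm | hm
  · simp [Ioo_eq_empty hm.not_gt]
  obtain ⟨hk, hl⟩ := lt_min_iff.1 hm
  have hcube : min k l ^ 3 ≤ k ^ ((3 : ℝ) / 2) * l ^ ((3 : ℝ) / 2) := by
    have := min_rpow_add_le_rpow_mul_rpow (p := 3 / 2) (q := 3 / 2) hk.le hl.le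
      (by norm_num) (by norm_num)
    rwa [show (3 / 2 + 3 / 2 : ℝ) = (3 : ℕ) by norm_num, Real.rpow_natCast] at this
  rw [setLIntegral_Ioo_zero_sq hm.le, ← ENNReal.ofReal_mul (by positivity),
    ENNReal.ofReal_div_of_pos three_pos, ENNReal.ofReal_ofNat, ENNReal.div_eq_inv_mul]
  gcongr

/-- For all measurable `F, G : (0,∞) → [0,∞]`,
`∫₀^∞ y² (∫_y^∞ F)(∫_y^∞ G) dy ≤ (1/3)(∫₀^∞ k^{3/2} F(k) dk)(∫₀^∞ k^{3/2} G(k) dk)`. -/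
theorem hardy_type_inequality_threehalves (F G : ℝ → ℝ≥0∞)
    (hF : Measurable F) (hG : Measurable G) :
    (∫⁻ y in Set.Ioi (0 : ℝ),
        ENNReal.ofReal (y ^ 2) * ((∫⁻ k in Set.Ioi y, F k) * ∫⁻ k in Set.Ioi y, G k)) ≤
      (3 : ℝ≥0∞)⁻¹ *
        ((∫⁻ k in Set.Ioi (0 : ℝ), ENNReal.ofReal (k ^ ((3 : ℝ) / 2)) * F k) *
          ∫⁻ k in Set.Ioi (0 : ℝ), ENNReal.ofReal (k ^ ((3 : ℝ) / 2)) * G k) := by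
  set μ := volume.restrict (Ioi (0 : ℝ))
  have hrestrict : ∀ y ∈ Ioi (0 : ℝ), μ.restrict (Ioi y) = volume.restrict (Ioi y) :=
    fun y hy => by
      rw [Measure.restrict_restrict measurableSet_Ioi, Ioi_inter_Ioi, sup_eq_left.2 hy.le]
  calc _ = ∫⁻ y, ENNReal.ofReal (y ^ 2) *
          ((∫⁻ k in Ioi y, F k ∂μ) * ∫⁻ l in Ioi y, G l ∂μ) ∂μ :=
        setLIntegral_congr_fun measurableSet_Ioi fun y hy => by rw [hrestrict y hy]
    _ = ∫⁻ p, (∫⁻ y in Iio (min p.1 p.2), ENNReal.ofReal (y ^ 2) ∂μ) * (F p.1 * G p.2)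
          ∂μ.prod μ :=
        lintegral_mul_setLIntegral_Ioi_mul_setLIntegral_Ioi (by fun_prop) hF hG
    _ ≤ ∫⁻ p, 3⁻¹ * ((ENNReal.ofReal (p.1 ^ ((3 : ℝ) / 2)) * F p.1) *
          (ENNReal.ofReal (p.2 ^ ((3 : ℝ) / 2)) * G p.2)) ∂μ.prod μ := by
        refine lintegral_mono fun p => ?_
        rw [Measure.restrict_restrict measurableSet_Iio, Iio_inter_Ioi]
        grw [setLIntegral_Ioo_zero_min_sq_le]
        exact (by ring : _ = _).le
    _ = _ := by
        rw [lintegral_const_mul _ (by fun_prop),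
          lintegral_prod_mul (f := fun k => ENNReal.ofReal (k ^ ((3 : ℝ) / 2)) * F k)
            (g := fun k => ENNReal.ofReal (k ^ ((3 : ℝ) / 2)) * G k) (by fun_prop) (by fun_prop)]
end
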